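/- For all natural numbers k and n with 0 < k, k < n and k * n even, there exists a connected k-regular simple graph on n vertices (for k ≥ 2; for k = 1 and n = 2 the single edge is connected). -/

import Mathlib

/-!
Take the circulant graph on `ℤ/n` whose jumps are `±1, …, ±m` for `m = ⌊k/2⌋`, together with the
jump `n/2` when `k` is odd (then `n` is even, as `k * n` is). The jump set is closed under negation
and avoids `0`, so every vertex `v` has the `k` distinct neighbours `d + v`; the jump `1` makes the
graph contain the `n`-cycle, hence connected. For `k = 1` the jump set is `{n/2}`, which contains
`1` only when `n = 2`.
-/

open Finset

namespace SimpleGraph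

variable {G : Type*} [AddGroup G]

theorem circulantGraph_mono {s t : Set G} (h : s ⊆ t) : circulantGraph s ≤ circulantGraph t :=
  fun _ _ huv => ⟨huv.1, huv.2.imp (@h _) (@h _)⟩

theorem neighborSet_circulantGraph {s : Set G} (h0 : (0 : G) ∉ s) (hneg : ∀ d ∈ s, -d ∈ s)
    (v : G) : (circulantGraph s).neighborSet v = (· + v) '' s := by
  ext w
  simp only [mem_neighborSet, circulantGraph_adj, Set.mem_image]
  constructor
  · rintro ⟨-, h | h⟩
    · exact ⟨w - v, by simpa using hneg _ h, sub_add_cancel w v⟩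
    · exact ⟨w - v, h, sub_add_cancel w v⟩
  · rintro ⟨d, hd, rfl⟩
    refine ⟨fun h => h0 ?_, Or.inr (by simpa using hd)⟩
    rwa [show d = 0 by simpa using h] at hd

theorem card_neighborSet_circulantGraph {s : Set G} (h0 : (0 : G) ∉ s)
    (hneg : ∀ d ∈ s, -d ∈ s) (v : G) :
    Nat.card ((circulantGraph s).neighborSet v) = Nat.card s := by
  rw [neighborSet_circulantGraph h0 hneg, Nat.card_image_of_injective (add_left_injective v)]

theorem circulantGraph_connected_of_one_mem {n : ℕ} {s : Set (Fin (n + 1))} (h : 1 ∈ s) :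
    (circulantGraph s).Connected := by
  refine cycleGraph_connected.mono ?_
  rw [cycleGraph_eq_circulantGraph]
  exact circulantGraph_mono (Set.singleton_subset_iff.mpr h)

end SimpleGraph

namespace Finset

variable {n : ℕ} {S : Finset ℕ}

theorem zero_notMem_attachFin [NeZero n] (hS : ∀ j ∈ S, j < n) (h0 : 0 ∉ S) :
    (0 : Fin n) ∉ S.attachFin hS := by
  rwa [mem_attachFin, Fin.val_zero]

theorem neg_mem_attachFin [NeZero n] (hS : ∀ j ∈ S, j < n) (h0 : 0 ∉ S)
    (hneg : ∀ j ∈ S, n - j ∈ S) {d : Fin n} (hd : d ∈ S.attachFin hS) :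
    -d ∈ S.attachFin hS := by
  rw [mem_attachFin] at hd ⊢
  rw [Fin.val_neg, if_neg (by rintro rfl; exact h0 hd)]
  exact hneg _ hd

end Finset

/-- The residues `±1, …, ±m` modulo `n`, as natural numbers in `[0, n)`. -/
def symmetricJumps (n m : ℕ) : Finset ℕ := Icc 1 m ∪ Icc (n - m) (n - 1)

theorem mem_symmetricJumps {n m j : ℕ} :
    j ∈ symmetricJumps n m ↔ 1 ≤ j ∧ j ≤ m ∨ n - m ≤ j ∧ j ≤ n - 1 := by
  simp only [symmetricJumps, mem_union, mem_Icc]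

theorem card_symmetricJumps {n m : ℕ} (h : 2 * m < n) : #(symmetricJumps n m) = 2 * m := by
  rw [symmetricJumps, card_union_of_disjoint, Nat.card_Icc, Nat.card_Icc]
  · omega
  · rw [disjoint_left]
    intro j
    simp only [mem_Icc]
    omega

theorem exists_jumpSet {k n : ℕ} (hk : 0 < k) (hkn : k < n) (heven : Even (k * n))
    (hconn : 2 ≤ k ∨ n = 2) :
    ∃ S : Finset ℕ, #S = k ∧ 1 ∈ S ∧ 0 ∉ S ∧ (∀ j ∈ S, j < n) ∧ ∀ j ∈ S, n - j ∈ S := by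
  obtain ⟨m, rfl | rfl⟩ := Nat.even_or_odd' k
  · refine ⟨symmetricJumps n m, card_symmetricJumps (by omega), ?_, ?_, ?_, ?_⟩ <;>
      simp only [mem_symmetricJumps] <;> omega
  · obtain ⟨r, rfl⟩ : Even n :=
      (Nat.even_mul.mp heven).resolve_left (Nat.not_even_two_mul_add_one m)
    have hr : r ∉ symmetricJumps (r + r) m := by
      rw [mem_symmetricJumps]
      omega
    refine ⟨insert r (symmetricJumps (r + r) m), ?_, ?_, ?_, ?_, ?_⟩
    · rw [card_insert_of_notMem hr, card_symmetricJumps (by omega)]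
    all_goals simp only [mem_insert, mem_symmetricJumps]; omega

open SimpleGraph in
/-- For `0 < k < n` with `k * n` even (and `k ≥ 2`, or `k = 1` and `n = 2`),
there exists a connected `k`-regular simple graph on `n` vertices. -/
theorem stmt_2 (k n : ℕ) (hk : 0 < k) (hkn : k < n) (heven : Even (k * n))
    (hconn : 2 ≤ k ∨ n = 2) :
    ∃ G : SimpleGraph (Fin n),
      G.Connected ∧ ∀ v : Fin n, Nat.card (G.neighborSet v) = k := by
  obtain ⟨N, rfl⟩ : ∃ N, n = N + 2 := ⟨n - 2, by omega⟩
  obtain ⟨S, hcard, h1, h0, hlt, hneg⟩ := exists_jumpSet hk hkn heven hconn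
  refine ⟨circulantGraph (S.attachFin hlt : Set (Fin (N + 2))), ?_, fun v => ?_⟩
  · exact circulantGraph_connected_of_one_mem (by simpa using h1)
  · rw [card_neighborSet_circulantGraph (zero_notMem_attachFin hlt h0)
      (fun _ => neg_mem_attachFin hlt h0 hneg), Nat.card_coe_set_eq, Set.ncard_coe_finset,
      card_attachFin, hcard]
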